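/- Let s be a time profile, let 1 ≤ n ≤ P−1, and let C^r be a real number with C_1 = C_n = C^r. Suppose there exists a real s^r with s_n < s^r ≤ d_n + m/μ satisfying (d_n + m/μ − s^r) + V(d_n + m/μ) = C^r, and suppose s^r < s_{n+1}. Then the forecasted cost satisfies Ĉ(s^r | s) ≤ C^r, and equality Ĉ(s^r | s) = C^r holds only if V(s^r) = C^r (in which case s^r = d_n + m/μ). -/

import Mathlib

/-- Schedule delay cost function `V(d) = β·max(−d,0) + γ·max(d,0)`. -/
noncomputable def sdc (β γ d : ℝ) : ℝ := β * max (-d) 0 + γ * max d 0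

/-- Destination arrival times: `d 0 = s 0`, `d (k+1) = max (d k + m/μ) (s (k+1))`. -/
noncomputable def arr (m μ : ℝ) (s : ℕ → ℝ) : ℕ → ℝ
  | 0 => s 0
  | k + 1 => max (arr m μ s k + m / μ) (s (k + 1))

/-- Trip cost of the `k`-th departing user. -/
noncomputable def cost (β γ m μ : ℝ) (s : ℕ → ℝ) (k : ℕ) : ℝ :=
  (arr m μ s k - s k) + sdc β γ (arr m μ s k)

/-- A time profile: strictly increasing departure times (0-indexed, users `0,…,P-1`). -/
def IsProfile (P : ℕ) (s : ℕ → ℝ) : Prop := ∀ i, i + 1 < P → s i < s (i + 1)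

/-- Equilibrium departure time of the first user. -/
noncomputable def tminus (P : ℕ) (m μ β γ : ℝ) : ℝ :=
  -(m * ((P : ℝ) - 1) / μ) * (γ / (β + γ))

/-- Equilibrium departure time of the last user. -/
noncomputable def tplus (P : ℕ) (m μ β γ : ℝ) : ℝ :=
  tminus P m μ β γ + m * ((P : ℝ) - 1) / μ

/-- Equilibrium trip cost. -/
noncomputable def rho (P : ℕ) (m μ β γ : ℝ) : ℝ :=
  (m * ((P : ℝ) - 1) / μ) * (β * γ / (β + γ))

/-- The equilibrium profile `s^e` (0-indexed: index `k` is the `(k+1)`-st departing user). -/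
noncomputable def se (P : ℕ) (m μ β γ : ℝ) (k : ℕ) : ℝ :=
  if (k : ℤ) ≤ ⌊γ * ((P : ℝ) - 1) / (β + γ)⌋ then
    tminus P m μ β γ + (m * (1 - β) / μ) * (k : ℝ)
  else
    tminus P m μ β γ + (m * (1 + γ) / μ) * (k : ℝ) - m * γ * ((P : ℝ) - 1) / μ

/-- The forecasted cost `Ĉ(t | s) = c`, as a relation (the cases are mutually exclusive
for `t` distinct from all departure times of the strictly increasing profile `s`). -/
def Forecast (P : ℕ) (β γ m μ : ℝ) (s : ℕ → ℝ) (t c : ℝ) : Prop :=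
  (∃ k, k + 1 < P ∧ s k < t ∧ t < s (k + 1) ∧
      arr m μ s (k + 1) - arr m μ s k = m / μ ∧
      c = cost β γ m μ s k +
        (cost β γ m μ s (k + 1) - cost β γ m μ s k) / (s (k + 1) - s k) * (t - s k)) ∨
  (∃ k, k + 1 < P ∧ s k < t ∧ t < s (k + 1) ∧
      m / μ < arr m μ s (k + 1) - arr m μ s k ∧
      ((t ≤ arr m μ s k ∧
          c = cost β γ m μ s k +
            (sdc β γ (arr m μ s k) - cost β γ m μ s k) / (arr m μ s k - s k) * (t - s k)) ∨
        (arr m μ s k < t ∧ c = sdc β γ t))) ∨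
  (s (P - 1) < t ∧ t < arr m μ s (P - 1) ∧
      c = cost β γ m μ s (P - 1) +
        (sdc β γ (arr m μ s (P - 1)) - cost β γ m μ s (P - 1)) /
          (arr m μ s (P - 1) - s (P - 1)) * (t - s (P - 1))) ∨
  ((t < s 0 ∨ arr m μ s (P - 1) ≤ t) ∧ c = sdc β γ t)


/-!
On `(s (n-1), s n)` the forecast is one of three things. If user `n` joins the queue of user
`n-1` without a gap, its cost is `C^r - (s n - s^r) < C^r`, so the interpolation between
`C_{n-1} = C^r` and `C_n` stays below `C^r`. If `s^r` still lies in the queue of user `n-1`,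
the forecast line has slope `-1` (waiting time decreases one for one), hence is below `C^r`.
Otherwise the forecast is `V(s^r)`, and since `V` decreases with slope at most `β < 1`,
`V(s^r) ≤ (D - s^r) + V(D) = C^r` for `D = d_{n-1} + m/μ`, with equality only at `s^r = D`.
-/

theorem IsProfile.strictMonoOn {P : ℕ} {s : ℕ → ℝ} (hs : IsProfile P s) :
    StrictMonoOn s (Set.Iic (P - 1)) :=
  strictMonoOn_Iic_of_lt_succ fun i hi => by
    simpa only [Order.succ_eq_add_one] using hs i (by omega)

theorem self_le_arr (m μ : ℝ) (s : ℕ → ℝ) : ∀ k, s k ≤ arr m μ s k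
  | 0 => le_rfl
  | _ + 1 => le_max_right _ _

theorem sdc_le_add_mul_sub {β γ d e : ℝ} (hβ : 0 ≤ β) (hγ : 0 ≤ γ) (hde : d ≤ e) :
    sdc β γ d ≤ sdc β γ e + β * (e - d) := by
  have hneg : max (-d) 0 ≤ max (-e) 0 + (e - d) :=
    max_le (by linarith [le_max_left (-e) 0]) (by linarith [le_max_right (-e) 0])
  have hpos : max d 0 ≤ max e 0 := max_le_max hde le_rfl
  unfold sdc
  nlinarith [mul_le_mul_of_nonneg_left hneg hβ, mul_le_mul_of_nonneg_left hpos hγ]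

theorem sdc_lt_sub_add_sdc {β γ t e : ℝ} (hβ : 0 ≤ β) (hβ1 : β < 1) (hγ : 0 ≤ γ) (hte : t < e) :
    sdc β γ t < (e - t) + sdc β γ e := by
  have := sdc_le_add_mul_sub hβ hγ hte.le
  nlinarith

theorem add_div_mul_sub_lt_self {x₀ x₁ y₀ y₁ t : ℝ} (hy : y₁ < y₀) (hx : x₀ < x₁) (ht : x₀ < t) :
    y₀ + (y₁ - y₀) / (x₁ - x₀) * (t - x₀) < y₀ := by
  have : (y₁ - y₀) / (x₁ - x₀) * (t - x₀) < 0 :=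
    mul_neg_of_neg_of_pos (div_neg_of_neg_of_pos (by linarith) (by linarith)) (by linarith)
  linarith

section Profile

variable {β γ m μ : ℝ} {s : ℕ → ℝ}

theorem cost_succ_of_arr_succ_sub_eq {k : ℕ} (hq : arr m μ s (k + 1) - arr m μ s k = m / μ) :
    cost β γ m μ s (k + 1) =
      (arr m μ s k + m / μ - s (k + 1)) + sdc β γ (arr m μ s k + m / μ) := by
  rw [cost, show arr m μ s (k + 1) = arr m μ s k + m / μ by linarith]

theorem sdc_arr_sub_cost_div_eq_neg_one {k : ℕ} (h : s k < arr m μ s k) :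
    (sdc β γ (arr m μ s k) - cost β γ m μ s k) / (arr m μ s k - s k) = -1 := by
  rw [cost, div_eq_iff (sub_ne_zero.mpr h.ne')]
  ring

theorem Forecast.cases_of_mem_Ioo {P a : ℕ} {t c : ℝ} (hs : IsProfile P s) (ha : a + 1 < P)
    (ht : t ∈ Set.Ioo (s a) (s (a + 1))) (hc : Forecast P β γ m μ s t c) :
    (arr m μ s (a + 1) - arr m μ s a = m / μ ∧
        c = cost β γ m μ s a +
          (cost β γ m μ s (a + 1) - cost β γ m μ s a) / (s (a + 1) - s a) * (t - s a)) ∨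
      (t ≤ arr m μ s a ∧
        c = cost β γ m μ s a +
          (sdc β γ (arr m μ s a) - cost β γ m μ s a) / (arr m μ s a - s a) * (t - s a)) ∨
      (arr m μ s a < t ∧ c = sdc β γ t) := by
  have hmono := hs.strictMonoOn.monotoneOn
  have mem : ∀ {i}, i < P → i ∈ Set.Iic (P - 1) := fun hi => Set.mem_Iic.mpr (by omega)
  have index_eq : ∀ k, k + 1 < P → s k < t → t < s (k + 1) → k = a := by
    intro k hk hkt htk
    rcases lt_trichotomy k a with hlt | rfl | hgt
    · linarith [ht.1, hmono (mem hk) (mem (by omega : a < P)) (by omega : k + 1 ≤ a)]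
    · rfl
    · linarith [ht.2, hmono (mem ha) (mem (by omega : k < P)) (by omega : a + 1 ≤ k)]
  have hlast : s (a + 1) ≤ arr m μ s (P - 1) :=
    (hmono (mem ha) (mem (by omega : P - 1 < P)) (by omega)).trans (self_le_arr m μ s _)
  rcases hc with ⟨k, hk, hkt, htk, hq, hcv⟩ | ⟨k, hk, hkt, htk, -, hcv⟩ | ⟨hPt, -, -⟩ |
      ⟨hout | hout, -⟩
  · obtain rfl := index_eq k hk hkt htk
    exact .inl ⟨hq, hcv⟩
  · obtain rfl := index_eq k hk hkt htk
    exact .inr hcv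
  · linarith [ht.2, hmono (mem ha) (mem (by omega : P - 1 < P)) (by omega : a + 1 ≤ P - 1)]
  · linarith [ht.1, hmono (mem (by omega : 0 < P)) (mem (by omega : a < P)) (Nat.zero_le a)]
  · linarith [ht.2]

end Profile

theorem forecast_at_reference_time_general (P : ℕ) (m μ β γ : ℝ)
    (hβ : 0 < β) (hβ1 : β < 1) (hγ : 0 < γ)
    (s : ℕ → ℝ) (hs : IsProfile P s)
    (n : ℕ) (hn : 1 ≤ n) (hnP : n ≤ P - 1)
    (Cr : ℝ) (hCn : cost β γ m μ s (n - 1) = Cr)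
    (sr : ℝ) (h1 : s (n - 1) < sr) (h2 : sr ≤ arr m μ s (n - 1) + m / μ)
    (heq : (arr m μ s (n - 1) + m / μ - sr) + sdc β γ (arr m μ s (n - 1) + m / μ) = Cr)
    (h3 : sr < s n) :
    ∀ c, Forecast P β γ m μ s sr c →
      c ≤ Cr ∧ (c = Cr → sdc β γ sr = Cr ∧ sr = arr m μ s (n - 1) + m / μ) := by
  obtain ⟨a, rfl⟩ : ∃ a, n = a + 1 := ⟨n - 1, by omega⟩
  simp only [Nat.add_sub_cancel] at hCn h1 h2 heq ⊢
  have of_lt : ∀ {c}, c < Cr →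
      c ≤ Cr ∧ (c = Cr → sdc β γ sr = Cr ∧ sr = arr m μ s a + m / μ) :=
    fun hc => ⟨hc.le, fun hce => absurd hce hc.ne⟩
  intro c hc
  rcases hc.cases_of_mem_Ioo hs (by omega) ⟨h1, h3⟩ with ⟨hq, rfl⟩ | ⟨hle, rfl⟩ | ⟨-, rfl⟩
  · have hlt : cost β γ m μ s (a + 1) < cost β γ m μ s a := by
      rw [cost_succ_of_arr_succ_sub_eq hq]
      linarith
    exact of_lt (add_div_mul_sub_lt_self hlt (by linarith) h1 |>.trans_eq hCn)
  · rw [sdc_arr_sub_cost_div_eq_neg_one (h1.trans_le hle), hCn]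
    exact of_lt (by linarith)
  · rcases h2.lt_or_eq with hlt | rfl
    · exact of_lt (heq ▸ sdc_lt_sub_add_sdc hβ.le hβ1 hγ.le hlt)
    · exact ⟨by linarith, fun hce => ⟨hce, rfl⟩⟩

theorem forecast_at_reference_time (P : ℕ) (hP : 2 ≤ P) (m μ β γ : ℝ)
    (hm : 0 < m) (hm1 : m ≤ 1) (hμ : 0 < μ)
    (hβ : 0 < β) (hβ1 : β < 1) (hγ : 0 < γ)
    (s : ℕ → ℝ) (hs : IsProfile P s)
    (n : ℕ) (hn : 1 ≤ n) (hnP : n ≤ P - 1)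
    (Cr : ℝ) (hC1 : cost β γ m μ s 0 = Cr) (hCn : cost β γ m μ s (n - 1) = Cr)
    (sr : ℝ) (h1 : s (n - 1) < sr) (h2 : sr ≤ arr m μ s (n - 1) + m / μ)
    (heq : (arr m μ s (n - 1) + m / μ - sr) + sdc β γ (arr m μ s (n - 1) + m / μ) = Cr)
    (h3 : sr < s n) :
    ∀ c, Forecast P β γ m μ s sr c →
      c ≤ Cr ∧ (c = Cr → sdc β γ sr = Cr ∧ sr = arr m μ s (n - 1) + m / μ) :=
  forecast_at_reference_time_general P m μ β γ hβ hβ1 hγ s hs n hn hnP Cr hCn sr h1 h2 heq h3
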